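/- arXiv:1404.5320 — 3 statements merged into one kernel-verified Lean document; each statement's English description precedes it below -/
import Mathlib

section
/- Let V be a 2×2 unitary of the form V = (1/√2)^L · [[z, y],[−y*, z*]] with y, z ∈ ℤ[ω] and L ∈ ℤ, applied to a target qubit with V ⊕ V† acting on a two-qubit system (target and ancilla) initialized as |ψ⟩⊗|0⟩ with the ancilla as the second tensor factor, followed by measurement of the ancilla in the computational basis. Then the probability of outcome 0 equals |z|²/2^L, and conditioned on outcome 0 the target qubit state equals (up to normalization and global phase) the state R|ψ⟩ where R = diag(1, z*/z); conditioned on outcome 1 the target state is Z|ψ⟩ up to global phase. -/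
open Complex Matrix

theorem stmt_11 (L : ℤ) (z y : ℂ) (hz : z ≠ 0)
    (hnorm : Complex.normSq z + Complex.normSq y = (2 : ℝ) ^ L)
    (ψ : Fin 2 → ℂ) (hψ : Complex.normSq (ψ 0) + Complex.normSq (ψ 1) = 1)
    (V : Matrix (Fin 2) (Fin 2) ℂ)
    (hV : V = ((Real.sqrt 2 : ℂ) ^ L)⁻¹ • !![z, y; -((starRingEnd ℂ) y), (starRingEnd ℂ) z])
    (U : Matrix (Fin 2 × Fin 2) (Fin 2 × Fin 2) ℂ)
    (hU : U = fun p q =>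
      if p.1 = q.1 then (if p.1 = 0 then V p.2 q.2 else (starRingEnd ℂ) (V q.2 p.2)) else 0)
    (χ : Fin 2 × Fin 2 → ℂ) (hχ : χ = fun p => if p.2 = 0 then ψ p.1 else 0)
    (φ : Fin 2 × Fin 2 → ℂ) (hφ : φ = U.mulVec χ) :
    -- probability of ancilla outcome 0 is |z|²/2^L
    (Complex.normSq (φ (0, 0)) + Complex.normSq (φ (1, 0)) = Complex.normSq z / (2 : ℝ) ^ L)
    -- on outcome 0 the target state is R|ψ⟩ with R = diag(1, z*/z), up to a nonzero scalar
    ∧ (∃ c : ℂ, c ≠ 0 ∧ φ (0, 0) = c * ψ 0 ∧ φ (1, 0) = c * (((starRingEnd ℂ) z / z) * ψ 1))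
    -- on outcome 1 the target state is Z|ψ⟩ up to a scalar
    ∧ (∃ c : ℂ, φ (0, 1) = c * ψ 0 ∧ φ (1, 1) = c * (-(ψ 1))) := by
  set s : ℂ := ((Real.sqrt 2 : ℂ) ^ L)
  have hs0 : s ≠ 0 := zpow_ne_zero _ (by
    simp [Complex.ofReal_ne_zero, Real.sqrt_eq_zero']
    try norm_num)
  have hcs : (starRingEnd ℂ) ((Real.sqrt 2 : ℂ) ^ L) = (Real.sqrt 2 : ℂ) ^ L := by
    rw [map_zpow₀, Complex.conj_ofReal]
  have h00 : φ (0,0) = s⁻¹ * z * ψ 0 := by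
    subst hφ hU hχ hV
    simp [Matrix.mulVec, dotProduct, Fintype.sum_prod_type, Fin.sum_univ_succ]
    try ring
  have h10 : φ (1,0) = s⁻¹ * (starRingEnd ℂ) z * ψ 1 := by
    subst hφ hU hχ hV
    simp [Matrix.mulVec, dotProduct, Fintype.sum_prod_type, Fin.sum_univ_succ]
    try ring
    try exact Or.inl (Or.inl hcs)
  have h01 : φ (0,1) = s⁻¹ * (-(starRingEnd ℂ) y) * ψ 0 := by
    subst hφ hU hχ hV
    simp [Matrix.mulVec, dotProduct, Fintype.sum_prod_type, Fin.sum_univ_succ]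
    try ring
  have h11 : φ (1,1) = s⁻¹ * (starRingEnd ℂ) y * ψ 1 := by
    subst hφ hU hχ hV
    simp [Matrix.mulVec, dotProduct, Fintype.sum_prod_type, Fin.sum_univ_succ]
    try ring
    try exact Or.inl (Or.inl hcs)
  have hns : Complex.normSq s = (2:ℝ) ^ L := by
    rw [show s = ((Real.sqrt 2 ^ L : ℝ) : ℂ) from by
      simp [s, Complex.ofReal_zpow], Complex.normSq_ofReal, ← mul_zpow,
      Real.mul_self_sqrt (by norm_num)]
  refine ⟨?_, ⟨s⁻¹ * z, mul_ne_zero (inv_ne_zero hs0) hz, by rw [h00],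
      by rw [h10]; field_simp⟩,
    ⟨s⁻¹ * (-(starRingEnd ℂ) y), by rw [h01], by rw [h11]; ring⟩⟩
  rw [h00, h10]
  simp only [Complex.normSq_mul, Complex.normSq_inv, Complex.normSq_conj, hns]
  rw [div_eq_mul_inv]
  linear_combination ((2:ℝ)^L)⁻¹ * Complex.normSq z * hψ
end

section
/- Let V ∈ ℂ^{2ⁿ×2ⁿ} be unitary and let α, β, γ ∈ ℂ and ℓ ∈ ℤ satisfy |α|²/2^ℓ + |β|² + |γ|² = 1. Then the 4·2ⁿ-dimensional block matrix W = [[(α/2^{ℓ/2})V, β̄·I, γ̄·I, 0],[β·I, −(ᾱ/2^{ℓ/2})V†, 0, γ̄·I],[γ·I, 0, −(ᾱ/2^{ℓ/2})V†, −β̄·I],[0, γ·I, −β·I, (α/2^{ℓ/2})V]] is unitary and has determinant 1. -/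
open Complex Matrix

/-- The reindexing equivalence between a 2×2-of-2×2 block index and `Fin 4 × N`. -/
def stmt13eqv (N : Type*) : ((N ⊕ N) ⊕ (N ⊕ N)) ≃ (Fin 4 × N) where
  toFun x := Sum.elim (Sum.elim (fun a => ((0 : Fin 4), a)) (fun a => ((1 : Fin 4), a)))
    (Sum.elim (fun a => ((2 : Fin 4), a)) (fun a => ((3 : Fin 4), a))) x
  invFun p := ![fun a => Sum.inl (Sum.inl a), fun a => Sum.inl (Sum.inr a),
    fun a => Sum.inr (Sum.inl a), fun a => Sum.inr (Sum.inr a)] p.1 p.2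
  left_inv := by rintro ((a | a) | (a | a)) <;> rfl
  right_inv := by rintro ⟨i, a⟩; fin_cases i <;> rfl

set_option maxHeartbeats 1000000 in
theorem stmt_13 (n : ℕ) (V : Matrix (Fin (2^n)) (Fin (2^n)) ℂ)
    (hV : V ∈ Matrix.unitaryGroup (Fin (2^n)) ℂ)
    (α β γ : ℂ) (ℓ : ℤ)
    (hc : Complex.normSq α / (2 : ℝ) ^ ℓ + Complex.normSq β + Complex.normSq γ = 1)
    (s : ℂ) (hs : s = (Real.sqrt 2 : ℂ) ^ ℓ)
    (W : Matrix (Fin 4 × Fin (2^n)) (Fin 4 × Fin (2^n)) ℂ)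
    (hW : W = fun p q =>
      (!![(α / s) • V, (starRingEnd ℂ β) • (1 : Matrix (Fin (2^n)) (Fin (2^n)) ℂ),
            (starRingEnd ℂ γ) • 1, 0;
          β • 1, -(((starRingEnd ℂ α) / s) • Vᴴ), 0, (starRingEnd ℂ γ) • 1;
          γ • 1, 0, -(((starRingEnd ℂ α) / s) • Vᴴ), -((starRingEnd ℂ β) • 1);
          0, γ • 1, -(β • 1), (α / s) • V] p.1 q.1) p.2 q.2) :
    W ∈ Matrix.unitaryGroup (Fin 4 × Fin (2^n)) ℂ ∧ W.det = 1 := by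
  -- basic facts about `s`
  have hs0 : s ≠ 0 := by
    rw [hs]
    refine zpow_ne_zero _ ?_
    simp [Complex.ofReal_ne_zero, Real.sqrt_eq_zero']
  have hsconj : starRingEnd ℂ s = s := by
    rw [hs, map_zpow₀, Complex.conj_ofReal]
  have hss : s * s = (((2 : ℝ) ^ ℓ : ℝ) : ℂ) := by
    rw [hs, ← mul_zpow, ← Complex.ofReal_mul,
      Real.mul_self_sqrt (by norm_num : (0:ℝ) ≤ 2), Complex.ofReal_zpow]
  -- the key scalar identity
  have key : (α / s) * starRingEnd ℂ (α / s) + β * starRingEnd ℂ β + γ * starRingEnd ℂ γ = 1 := by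
    have h2 : (((2 : ℝ) ^ ℓ : ℝ) : ℂ) ≠ 0 := by
      simp only [ne_eq, Complex.ofReal_eq_zero]
      positivity
    have hcC : ((Complex.normSq α : ℂ)) / (((2 : ℝ) ^ ℓ : ℝ) : ℂ)
        + (Complex.normSq β : ℂ) + (Complex.normSq γ : ℂ) = 1 := by
      rw [← Complex.ofReal_div, ← Complex.ofReal_add, ← Complex.ofReal_add, hc,
        Complex.ofReal_one]
    have ha : (α / s) * starRingEnd ℂ (α / s) = (Complex.normSq α : ℂ) / (((2:ℝ)^ℓ : ℝ) : ℂ) := by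
      rw [map_div₀, hsconj, div_mul_div_comm, hss, Complex.mul_conj]
    rw [ha, Complex.mul_conj, Complex.mul_conj]
    exact hcC
  -- unitarity of V
  have hV1 : V * Vᴴ = 1 := by
    have := (Matrix.mem_unitaryGroup_iff).mp hV
    rwa [Matrix.star_eq_conjTranspose] at this
  have hV2 : Vᴴ * V = 1 := by
    have := (Matrix.mem_unitaryGroup_iff').mp hV
    rwa [Matrix.star_eq_conjTranspose] at this
  -- the inner block matrix
  set A : Matrix (Fin (2^n) ⊕ Fin (2^n)) (Fin (2^n) ⊕ Fin (2^n)) ℂ :=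
    fromBlocks ((α / s) • V) ((starRingEnd ℂ β) • 1) (β • 1)
      (-(((starRingEnd ℂ α) / s) • Vᴴ)) with hAdef
  have hAH : Aᴴ = fromBlocks (((starRingEnd ℂ α) / s) • Vᴴ) ((starRingEnd ℂ β) • 1)
      (β • 1) (-((α / s) • V)) := by
    rw [hAdef, fromBlocks_conjTranspose, fromBlocks_inj]
    refine ⟨?_, ?_, ?_, ?_⟩ <;>
      simp [conjTranspose_smul, map_div₀, hsconj, Complex.star_def]
  set c : ℂ := 1 - γ * starRingEnd ℂ γ with hcdef
  have hca : (α / s) * starRingEnd ℂ (α / s) + β * starRingEnd ℂ β = c := by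
    rw [hcdef]; linear_combination key
  have hconjdiv : starRingEnd ℂ (α / s) = starRingEnd ℂ α / s := by
    rw [map_div₀, hsconj]
  rw [hconjdiv] at key
  have hAA : A * Aᴴ = c • 1 := by
    rw [hAH, hAdef, fromBlocks_multiply]
    conv_rhs => rw [← fromBlocks_one, fromBlocks_smul]
    rw [fromBlocks_inj]
    refine ⟨?_, ?_, ?_, ?_⟩ <;>
      simp only [Matrix.smul_mul, Matrix.mul_smul, Matrix.neg_mul, Matrix.mul_neg,
        Matrix.one_mul, Matrix.mul_one, hV1, hV2, smul_smul, smul_neg, neg_neg, smul_zero,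
        hconjdiv, hcdef] <;>
      match_scalars <;> first
        | ring1
        | linear_combination key
  have hA'A : Aᴴ * A = c • 1 := by
    rw [hAH, hAdef, fromBlocks_multiply]
    conv_rhs => rw [← fromBlocks_one, fromBlocks_smul]
    rw [fromBlocks_inj]
    refine ⟨?_, ?_, ?_, ?_⟩ <;>
      simp only [Matrix.smul_mul, Matrix.mul_smul, Matrix.neg_mul, Matrix.mul_neg,
        Matrix.one_mul, Matrix.mul_one, hV1, hV2, smul_smul, smul_neg, neg_neg, smul_zero,
        hconjdiv, hcdef] <;>
      match_scalars <;> first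
        | ring1
        | linear_combination key
  -- the outer block matrix
  set W2 : Matrix ((Fin (2^n) ⊕ Fin (2^n)) ⊕ (Fin (2^n) ⊕ Fin (2^n)))
      ((Fin (2^n) ⊕ Fin (2^n)) ⊕ (Fin (2^n) ⊕ Fin (2^n))) ℂ :=
    fromBlocks A ((starRingEnd ℂ γ) • 1) (γ • 1) (-Aᴴ) with hW2def
  have hW2H : W2ᴴ = fromBlocks Aᴴ ((starRingEnd ℂ γ) • 1) (γ • 1) (-A) := by
    rw [hW2def, fromBlocks_conjTranspose, conjTranspose_neg, conjTranspose_conjTranspose]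
    congr 1 <;> simp [conjTranspose_smul, Complex.star_def]
  have hγc : γ * starRingEnd ℂ γ + c = 1 := by rw [hcdef]; ring
  have hW2unit : W2 * W2ᴴ = 1 := by
    rw [hW2H, hW2def, fromBlocks_multiply]
    conv_rhs => rw [← fromBlocks_one]
    rw [fromBlocks_inj]
    refine ⟨?_, ?_, ?_, ?_⟩ <;>
      simp only [hAA, hA'A, Matrix.smul_mul, Matrix.mul_smul, Matrix.neg_mul, Matrix.mul_neg,
        Matrix.one_mul, Matrix.mul_one, smul_smul, smul_neg, neg_neg, hcdef] <;>
      match_scalars <;> first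
        | ring1
        | linear_combination key
  -- W is the reindexed version of W2
  have hWW : W = W2.submatrix (stmt13eqv (Fin (2^n))).symm (stmt13eqv (Fin (2^n))).symm := by
    subst hW
    ext ⟨i, x⟩ ⟨j, y⟩
    fin_cases i <;> fin_cases j <;>
      simp [stmt13eqv, hW2def, hAdef, hAH, Matrix.submatrix_apply, fromBlocks,
        Matrix.one_apply, Matrix.smul_apply, Matrix.neg_apply, Sum.inl.injEq, Sum.inr.injEq,
        map_div₀, hsconj] <;>
      (try simp [apply_ite (starRingEnd ℂ), eq_comm])
  have hWunit : W * Wᴴ = 1 := by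
    rw [hWW, conjTranspose_submatrix, submatrix_mul_equiv, hW2unit, submatrix_one_equiv]
  refine ⟨Matrix.mem_unitaryGroup_iff.mpr (by rwa [Matrix.star_eq_conjTranspose]), ?_⟩
  -- determinant
  have hdetW : W.det = W2.det := by rw [hWW, det_submatrix_equiv_self]
  have hm : Even (Fintype.card (Fin (2^n) ⊕ Fin (2^n))) := by
    simp only [Fintype.card_sum, Fintype.card_fin]
    exact ⟨2^n, rfl⟩
  rw [hdetW]
  by_cases hc0 : c = 0
  · -- degenerate case : A = 0
    have hγ1 : starRingEnd ℂ γ * γ = 1 := by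
      have := hγc; rw [hc0, add_zero] at this; linear_combination this
    have habs : (α / s) * starRingEnd ℂ (α / s) + β * starRingEnd ℂ β = 0 := by
      rw [hca, hc0]
    have hαβ : α / s = 0 ∧ β = 0 := by
      rw [Complex.mul_conj, Complex.mul_conj, ← Complex.ofReal_add,
        Complex.ofReal_eq_zero] at habs
      constructor
      · have h1 : Complex.normSq (α / s) = 0 := by
          nlinarith [Complex.normSq_nonneg (α / s), Complex.normSq_nonneg β]
        exact Complex.normSq_eq_zero.mp h1
      · have h1 : Complex.normSq β = 0 := by
          nlinarith [Complex.normSq_nonneg (α / s), Complex.normSq_nonneg β]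
        exact Complex.normSq_eq_zero.mp h1
    have hA0 : A = 0 := by
      have hα0 : α / s = 0 := hαβ.1
      have hα0' : starRingEnd ℂ α / s = 0 := by
        rw [← hconjdiv, hα0, map_zero]
      rw [hAdef, hα0, hα0', hαβ.2, map_zero]
      simp
    have hAH0 : Aᴴ = 0 := by rw [hA0, conjTranspose_zero]
    -- factor W2 into triangular matrices
    set U1 : Matrix ((Fin (2^n) ⊕ Fin (2^n)) ⊕ (Fin (2^n) ⊕ Fin (2^n)))
        ((Fin (2^n) ⊕ Fin (2^n)) ⊕ (Fin (2^n) ⊕ Fin (2^n))) ℂ :=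
      fromBlocks 1 ((starRingEnd ℂ γ) • 1) 0 1 with hU1
    set U2 : Matrix ((Fin (2^n) ⊕ Fin (2^n)) ⊕ (Fin (2^n) ⊕ Fin (2^n)))
        ((Fin (2^n) ⊕ Fin (2^n)) ⊕ (Fin (2^n) ⊕ Fin (2^n))) ℂ :=
      fromBlocks 1 0 (-(γ • 1)) 1 with hU2
    set U4 : Matrix ((Fin (2^n) ⊕ Fin (2^n)) ⊕ (Fin (2^n) ⊕ Fin (2^n)))
        ((Fin (2^n) ⊕ Fin (2^n)) ⊕ (Fin (2^n) ⊕ Fin (2^n))) ℂ :=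
      fromBlocks (-1) 0 0 1 with hU4
    have h1 : (starRingEnd ℂ γ * γ) •
        (1 : Matrix (Fin (2^n) ⊕ Fin (2^n)) (Fin (2^n) ⊕ Fin (2^n)) ℂ) = 1 := by
      rw [hγ1, one_smul]
    have h1' : (γ * starRingEnd ℂ γ) •
        (1 : Matrix (Fin (2^n) ⊕ Fin (2^n)) (Fin (2^n) ⊕ Fin (2^n)) ℂ) = 1 := by
      rw [mul_comm, hγ1, one_smul]
    have hfact : W2 = U1 * U2 * U1 * U4 := by
      rw [hW2def, hAH0, hA0, neg_zero, hU1, hU2, hU4,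
        fromBlocks_multiply, fromBlocks_multiply, fromBlocks_multiply]
      simp only [Matrix.one_mul, Matrix.mul_one, Matrix.mul_zero, Matrix.zero_mul,
        Matrix.mul_neg, Matrix.neg_mul, add_zero, zero_add, neg_neg, smul_neg,
        Matrix.smul_mul, Matrix.mul_smul, smul_smul, h1, h1']
      rw [fromBlocks_inj]
      refine ⟨?_, ?_, ?_, ?_⟩ <;> simp
    rw [hfact, det_mul, det_mul, det_mul, hU1, hU2, hU4]
    simp only [det_fromBlocks_zero₂₁, det_fromBlocks_zero₁₂, det_one, det_neg,
      mul_one, one_mul, hm.neg_one_pow]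
  · -- invertible case
    haveI : Invertible A := by
      apply invertibleOfRightInverse A (c⁻¹ • Aᴴ)
      rw [Matrix.mul_smul, hAA, smul_smul, inv_mul_cancel₀ hc0, one_smul]
    have hinv : ⅟A = c⁻¹ • Aᴴ := by
      apply invOf_eq_right_inv
      rw [Matrix.mul_smul, hAA, smul_smul, inv_mul_cancel₀ hc0, one_smul]
    rw [hW2def, det_fromBlocks₁₁, hinv]
    have hschur : -Aᴴ - (γ • 1) * (c⁻¹ • Aᴴ) * ((starRingEnd ℂ γ) • 1) = (-c⁻¹) • Aᴴ := by
      have h2 : starRingEnd ℂ γ * γ * c⁻¹ = c⁻¹ - 1 := by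
        rw [show starRingEnd ℂ γ * γ = 1 - c by linear_combination hγc,
          sub_mul, one_mul, mul_inv_cancel₀ hc0]
      simp only [Matrix.smul_mul, Matrix.mul_smul, Matrix.one_mul, Matrix.mul_one,
        smul_smul, h2]
      match_scalars
      have h4 : (1 - starRingEnd ℂ γ * γ) * (1 - starRingEnd ℂ γ * γ)⁻¹ = 1 :=
        mul_inv_cancel₀ (fun h => hc0 (by rw [hcdef]; linear_combination h))
      linear_combination h4
    rw [hschur, Matrix.det_smul, ← mul_assoc, mul_comm (A.det),
      mul_assoc, ← det_mul, hAA, Matrix.det_smul, det_one, mul_one, ← mul_pow,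
      neg_mul, inv_mul_cancel₀ hc0]
    rw [Even.neg_one_pow hm]
end

section
/- Let α ∈ ℤ be odd and consider S_α = {2^ℓ − α²(8k+3) : ℓ, k ≥ 0 integers} ∩ ℕ. Then S_α contains an infinite arithmetic progression {n₀ + 8α²k : k ≥ 0} with 0 ≤ n₀ < 8α², and gcd(n₀, 8α²) = 1; consequently, by Dirichlet's theorem, S_α contains infinitely many primes, all congruent to 5 mod 8. -/
def Sαset (α : ℤ) : Set ℕ :=
  {n | 0 < n ∧ ∃ ℓ k : ℕ, (n : ℤ) = 2 ^ ℓ - α ^ 2 * (8 * k + 3)}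

/-!
Put `a = α²`, which is odd. Since `2 ^ φ(a) ≡ 1 [MOD a]`, every power `2 ^ (3 + φ(a) t)` is
`≡ 8 [MOD 8a]`, and these powers are arbitrarily large; so `n ∈ S_α` as soon as
`n + 3a ≡ 8 [MOD 8a]`. This is the residue class of `n₀ = (8 + 5a) % 8a`, which is prime to `8a`,
and Dirichlet's theorem supplies the primes. Modulo 8, `a ≡ 1` and `2 ^ ℓ ≡ 0` for `ℓ ≥ 3`, while
`ℓ ≤ 2` only gives elements `≤ 1`.
-/

theorem Nat.infinite_setOf_prime_mem_of_forall_add_mul_mem {S : Set ℕ} {a q : ℕ} (hq : q ≠ 0)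
    (ha : a.Coprime q) (hS : ∀ k, a + q * k ∈ S) : {p | p ∈ S ∧ p.Prime}.Infinite := by
  refine Set.infinite_of_forall_exists_gt fun n ↦ ?_
  obtain ⟨p, hpn, hp, hpa⟩ := Nat.forall_exists_prime_gt_and_modEq (max n a) hq ha
  have hap : a ≤ p := (le_max_right n a).trans hpn.le
  obtain ⟨k, hk⟩ := (Nat.modEq_iff_dvd' hap).1 hpa.symm
  rw [Nat.sub_eq_iff_eq_add' hap] at hk
  exact ⟨p, ⟨hk ▸ hS k, hp⟩, (le_max_left n a).trans_lt hpn⟩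

theorem Nat.pow_add_totient_mul_modEq {a b : ℕ} (hab : b.Coprime a) (j t : ℕ) :
    b ^ (j + Nat.totient a * t) ≡ b ^ j [MOD b ^ j * a] := by
  have h : b ^ (Nat.totient a * t) ≡ 1 [MOD a] := by
    simpa [pow_mul] using (Nat.ModEq.pow_totient hab).pow t
  simpa [pow_add] using h.mul_left' (b ^ j)

theorem Nat.exists_two_pow_eq_add_mul_of_modEq {a n : ℕ} (ha : Odd a)
    (hn : n + 3 * a ≡ 8 [MOD 8 * a]) : ∃ ℓ k : ℕ, 2 ^ ℓ = n + a * (8 * k + 3) := by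
  set ℓ := 3 + Nat.totient a * (n + 3 * a)
  have hmod : 2 ^ ℓ ≡ 8 [MOD 8 * a] :=
    Nat.pow_add_totient_mul_modEq (Nat.coprime_two_left.2 ha) 3 (n + 3 * a)
  have hle : n + 3 * a ≤ 2 ^ ℓ := by
    have : 1 ≤ Nat.totient a := Nat.totient_pos.2 ha.pos
    calc n + 3 * a ≤ 2 ^ (n + 3 * a) := Nat.lt_two_pow_self.le
      _ ≤ 2 ^ ℓ := Nat.pow_le_pow_right two_pos (by simp only [ℓ]; nlinarith)
  obtain ⟨k, hk⟩ := (Nat.modEq_iff_dvd' hle).1 (hn.trans hmod.symm)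
  rw [Nat.sub_eq_iff_eq_add' hle] at hk
  exact ⟨ℓ, k, by rw [hk]; ring⟩

theorem Nat.coprime_eight_add_five_mul_mod {a : ℕ} (ha : Odd a) :
    ((8 + 5 * a) % (8 * a)).Coprime (8 * a) := by
  rw [ZMod.coprime_mod_iff_coprime]
  have h2a : Nat.Coprime 2 a := Nat.coprime_two_left.2 ha
  refine Nat.Coprime.mul_right ?_ ?_
  · have : Odd (8 + 5 * a) := (by decide : Even 8).add_odd ((by decide : Odd 5).mul ha)
    simpa using (Nat.coprime_two_right.2 this).pow_right 3
  · simpa [Nat.coprime_add_mul_right_left] using h2a.pow_left 3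

theorem Nat.eight_add_five_mul_mod_add_mul_add_modEq (a k : ℕ) :
    (8 + 5 * a) % (8 * a) + 8 * a * k + 3 * a ≡ 8 [MOD 8 * a] :=
  calc (8 + 5 * a) % (8 * a) + 8 * a * k + 3 * a ≡ 8 + 5 * a + 8 * a * k + 3 * a [MOD 8 * a] :=
        ((Nat.mod_modEq _ _).add_right _).add_right _
    _ = 8 + 8 * a * (k + 1) := by ring
    _ ≡ 8 [MOD 8 * a] := by simp [Nat.ModEq]

lemma mem_Sαset_of_two_pow_eq {α : ℤ} {n ℓ k : ℕ} (hn : 0 < n)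
    (h : 2 ^ ℓ = n + (α ^ 2).natAbs * (8 * k + 3)) : n ∈ Sαset α := by
  refine ⟨hn, ℓ, k, ?_⟩
  have hcast : ((α ^ 2).natAbs : ℤ) = α ^ 2 := Int.natAbs_of_nonneg (sq_nonneg α)
  have h' : (2 : ℤ) ^ ℓ = n + α ^ 2 * (8 * k + 3) := by rw [← hcast]; exact_mod_cast h
  linarith

lemma Int.sq_emod_eight_of_odd {α : ℤ} (hα : Odd α) : α ^ 2 % 8 = 1 := by
  obtain ⟨b, rfl⟩ := hα
  obtain ⟨e, he⟩ := Int.even_mul_succ_self b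
  rw [show (2 * b + 1) ^ 2 = 8 * e + 1 by linear_combination 4 * he]
  omega

lemma mod_eight_eq_five_of_mem_Sαset {α : ℤ} (hα : Odd α) {n : ℕ} (hn : n ∈ Sαset α)
    (h2 : 2 ≤ n) : n % 8 = 5 := by
  obtain ⟨-, ℓ, k, h⟩ := hn
  obtain ⟨c, hc⟩ : ∃ c, α ^ 2 = 8 * c + 1 :=
    ⟨α ^ 2 / 8, by have := Int.sq_emod_eight_of_odd hα; omega⟩
  have hc0 : 0 ≤ c := by nlinarith [sq_nonneg α]
  rcases Nat.lt_or_ge ℓ 3 with hℓ | hℓ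
  · have : (2 : ℤ) ^ ℓ ≤ 4 := by interval_cases ℓ <;> norm_num
    nlinarith
  · obtain ⟨m, rfl⟩ := Nat.exists_eq_add_of_le hℓ
    have : (n : ℤ) = 8 * (2 ^ m - 8 * c * k - 3 * c - k) - 3 := by rw [h, hc]; ring
    omega

theorem stmt_17 (α : ℤ) (hα : Odd α) :
    (∃ n₀ : ℕ, n₀ < 8 * (α ^ 2).natAbs ∧ Nat.Coprime n₀ (8 * (α ^ 2).natAbs) ∧
      ∀ k : ℕ, n₀ + 8 * (α ^ 2).natAbs * k ∈ Sαset α) ∧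
    {p | p ∈ Sαset α ∧ p.Prime}.Infinite ∧
    (∀ p ∈ Sαset α, Nat.Prime p → p % 8 = 5) := by
  set a := (α ^ 2).natAbs
  have ha : Odd a := Int.natAbs_odd.2 hα.pow
  have hq : 8 * a ≠ 0 := by have := ha.pos; omega
  set n₀ := (8 + 5 * a) % (8 * a)
  have hcop : n₀.Coprime (8 * a) := Nat.coprime_eight_add_five_mul_mod ha
  have hn₀ : 0 < n₀ := Nat.pos_of_ne_zero fun h ↦ by simp [h] at hcop
  have hAP : ∀ k, n₀ + 8 * a * k ∈ Sαset α := fun k ↦ by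
    obtain ⟨ℓ, j, h⟩ := Nat.exists_two_pow_eq_add_mul_of_modEq ha
      (Nat.eight_add_five_mul_mod_add_mul_add_modEq a k)
    exact mem_Sαset_of_two_pow_eq (by positivity) h
  exact ⟨⟨n₀, Nat.mod_lt _ (Nat.pos_of_ne_zero hq), hcop, hAP⟩,
    Nat.infinite_setOf_prime_mem_of_forall_add_mul_mem hq hcop hAP,
    fun p hp hpp ↦ mod_eight_eq_five_of_mem_Sαset hα hp hpp.two_le⟩
end
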